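/- For fixed τ ∈ ℍ with v = Im(τ) and u ∈ ℂ, the series R(u;τ) := Σ_{ν ∈ 1/2 + ℤ} { sgn(ν) − E((ν + Im(u)/v)√(2v)) } (−1)^{ν−1/2} e(−ν²τ/2) e(νu) converges absolutely, where E(t) := 2∫₀^t e^{−πw²}dw and e(w) := exp(2πiw). -/

import Mathlib

/-! For `|t| ≥ 1` the factor `sgn(t) − E(t)` is a Gaussian tail, at most `e^{−πt²}`. Once `ν` is
large, `sgn(ν) = sgn(t)` for `t = (ν + a)√(2v)`, and `e^{−2πv(ν+a)²}` beats the growth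
`|e(−ν²τ/2) e(νu)| = e^{πvν² − 2πνav}`: the product is `e^{−πv(ν² + 6aν + 2a²)}`, a Gaussian in `ν`,
hence summable over `ℤ` like a theta series. -/

noncomputable section

/-- `E(t) := 2 ∫₀^t e^{−πw²} dw`. -/
def EE (t : ℝ) : ℝ := 2 * ∫ w in (0 : ℝ)..t, Real.exp (-Real.pi * w ^ 2)

open MeasureTheory Set Filter Real

lemma EE_neg (t : ℝ) : EE (-t) = -EE t := by
  have h := intervalIntegral.integral_comp_neg (a := 0) (b := -t)
    (fun w => exp (-π * w ^ 2))
  simp only [neg_neg, neg_zero, neg_sq] at h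
  rw [EE, EE, h, intervalIntegral.integral_symm]
  ring

lemma integral_Ioi_exp_neg_pi_mul_sq_le {t : ℝ} (ht : 0 < t) :
    ∫ x in Ioi t, exp (-π * x ^ 2) ≤ exp (-π * t ^ 2) / (2 * π * t) := by
  have hrate : -(2 * π * t) < 0 := neg_neg_of_pos (by positivity)
  calc ∫ x in Ioi t, exp (-π * x ^ 2)
      ≤ ∫ x in Ioi t, exp (π * t ^ 2) * exp (-(2 * π * t) * x) := by
        refine setIntegral_mono_on (integrable_exp_neg_mul_sq pi_pos).integrableOn
          ((integrableOn_exp_mul_Ioi hrate t).const_mul _) measurableSet_Ioi fun x _ => ?_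
        rw [← exp_add]
        gcongr
        nlinarith [mul_nonneg pi_pos.le (sq_nonneg (x - t))]
    _ = exp (-π * t ^ 2) / (2 * π * t) := by
        rw [integral_const_mul, integral_exp_mul_Ioi hrate, neg_div_neg_eq, mul_div_assoc',
          ← exp_add]
        field_simp
        ring_nf

lemma one_sub_EE_eq_integral_Ioi {t : ℝ} (ht : 0 ≤ t) :
    1 - EE t = 2 * ∫ x in Ioi t, exp (-π * x ^ 2) := by
  have hint := (integrable_exp_neg_mul_sq pi_pos).integrableOn (s := Ioi t)
  have half : ∫ x in Ioi 0, exp (-π * x ^ 2) = 1 / 2 := by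
    rw [integral_gaussian_Ioi, div_self pi_ne_zero, sqrt_one]
  rw [← Ioc_union_Ioi_eq_Ioi ht, setIntegral_union (Ioc_disjoint_Ioi le_rfl) measurableSet_Ioi
    (integrable_exp_neg_mul_sq pi_pos).integrableOn hint] at half
  rw [EE, intervalIntegral.integral_of_le ht]
  linarith

lemma abs_sign_sub_EE_le {t : ℝ} (ht : 1 ≤ |t|) : |sign t - EE t| ≤ exp (-π * t ^ 2) := by
  wlog hpos : 0 < t generalizing t
  · have hneg : t < 0 := lt_of_le_of_ne (not_lt.mp hpos) (by rintro rfl; norm_num at ht)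
    have h := this (t := -t) (by rwa [abs_neg]) (neg_pos.mpr hneg)
    rw [sign_of_pos (neg_pos.mpr hneg), EE_neg, neg_sq] at h
    rw [sign_of_neg hneg, ← abs_neg]
    convert h using 2
    ring
  rw [abs_of_pos hpos] at ht
  have htail_nonneg : 0 ≤ ∫ x in Ioi t, exp (-π * x ^ 2) :=
    setIntegral_nonneg measurableSet_Ioi fun _ _ => (exp_pos _).le
  rw [sign_of_pos hpos, one_sub_EE_eq_integral_Ioi hpos.le, abs_of_nonneg (by positivity)]
  calc 2 * ∫ x in Ioi t, exp (-π * x ^ 2) ≤ 2 * (exp (-π * t ^ 2) / (2 * π * t)) := by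
        gcongr; exact integral_Ioi_exp_neg_pi_mul_sq_le hpos
    _ = exp (-π * t ^ 2) / (π * t) := by field_simp
    _ ≤ exp (-π * t ^ 2) := div_le_self (exp_pos _).le (by nlinarith [pi_gt_three])

lemma eventually_abs_sign_sub_EE_le (a : ℝ) {s : ℝ} (hs : 0 < s) :
    ∀ᶠ x in cocompact ℝ, |sign x - EE ((x + a) * s)| ≤ exp (-π * ((x + a) * s) ^ 2) := by
  have of_sign_eq : ∀ x, sign ((x + a) * s) = sign x → 1 ≤ |(x + a) * s| →
      |sign x - EE ((x + a) * s)| ≤ exp (-π * ((x + a) * s) ^ 2) := fun x hsign ht =>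
    hsign ▸ abs_sign_sub_EE_le ht
  rw [cocompact_eq_atBot_atTop, eventually_sup]
  constructor
  · have ht : Tendsto (fun x => (x + a) * s) atBot atBot :=
      (tendsto_atBot_add_const_right _ a tendsto_id).atBot_mul_const hs
    filter_upwards [eventually_lt_atBot 0, ht.eventually_le_atBot (-1)] with x hx hxt
    refine of_sign_eq x ?_ (by rw [abs_of_neg (by linarith)]; linarith)
    rw [sign_of_neg hx, sign_of_neg (by linarith)]
  · have ht : Tendsto (fun x => (x + a) * s) atTop atTop :=
      (tendsto_atTop_add_const_right _ a tendsto_id).atTop_mul_const hs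
    filter_upwards [eventually_gt_atTop 0, ht.eventually_ge_atTop 1] with x hx hxt
    refine of_sign_eq x ?_ (by rw [abs_of_pos (by linarith)]; linarith)
    rw [sign_of_pos hx, sign_of_pos (by linarith)]

lemma summable_exp_neg_quadratic {v : ℝ} (hv : 0 < v) (b c : ℝ) :
    Summable fun n : ℤ => exp (-(v * n ^ 2 + b * n + c)) := by
  refine ((summable_pow_mul_jacobiTheta₂_term_bound (|b| / (2 * π)) (div_pos hv pi_pos) 0).mul_left
    (exp (-c))).of_nonneg_of_le (fun _ => (exp_pos _).le) fun n => ?_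
  rw [pow_zero, one_mul, ← exp_add]
  gcongr
  have := neg_abs_le (b * n)
  rw [abs_mul] at this
  field_simp
  rw [Int.cast_abs]
  nlinarith

lemma norm_summand (c : ℝ) (n : ℤ) (τ u : ℂ) :
    ‖(c : ℂ) * (-1 : ℂ) ^ n * Complex.exp (-(π : ℂ) * Complex.I * ((n : ℂ) + 1 / 2) ^ 2 * τ)
        * Complex.exp (2 * (π : ℂ) * Complex.I * ((n : ℂ) + 1 / 2) * u)‖
      = |c| * exp (π * τ.im * ((n : ℝ) + 1 / 2) ^ 2 - 2 * π * ((n : ℝ) + 1 / 2) * u.im) := by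
  set ν : ℝ := n + 1 / 2
  have hquad : -(π : ℂ) * Complex.I * ((n : ℂ) + 1 / 2) ^ 2 * τ
      = ((π * ν ^ 2 : ℝ) : ℂ) * -(Complex.I * τ) := by push_cast [ν]; ring
  have hlin : 2 * (π : ℂ) * Complex.I * ((n : ℂ) + 1 / 2) * u
      = ((2 * π * ν : ℝ) : ℂ) * (Complex.I * u) := by push_cast [ν]; ring
  rw [hquad, hlin, norm_mul, norm_mul, norm_mul, norm_zpow, norm_neg, norm_one, one_zpow, mul_one,
    Complex.norm_real, Complex.norm_exp, Complex.norm_exp, Complex.re_ofReal_mul,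
    Complex.re_ofReal_mul, Complex.neg_re, Complex.I_mul_re, Complex.I_mul_re, mul_assoc,
    ← exp_add, norm_eq_abs]
  ring_nf

/-- Absolute convergence of Zwegers' series
`R(u;τ) = Σ_{ν ∈ 1/2+ℤ} {sgn(ν) − E((ν+Im(u)/v)√(2v))}(−1)^{ν−1/2} e(−ν²τ/2) e(νu)`,
parametrized by `ν = n + 1/2`, `n ∈ ℤ`. -/
theorem stmt18 (τ u : ℂ) (hτ : 0 < τ.im) :
    Summable (fun n : ℤ =>
      ((Real.sign ((n : ℝ) + 1 / 2)
          - EE ((((n : ℝ) + 1 / 2) + u.im / τ.im) * Real.sqrt (2 * τ.im)) : ℝ) : ℂ)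
        * (-1 : ℂ) ^ n
        * Complex.exp (-(Real.pi : ℂ) * Complex.I * ((n : ℂ) + 1 / 2) ^ 2 * τ)
        * Complex.exp (2 * (Real.pi : ℂ) * Complex.I * ((n : ℂ) + 1 / 2) * u)) := by
  set v := τ.im
  set a := u.im / v
  have hua : u.im = a * v := (div_mul_cancel₀ _ hτ.ne').symm
  have hshift : Tendsto (fun n : ℤ => (n : ℝ) + 1 / 2) cofinite (cocompact ℝ) :=
    (Homeomorph.addRight (1 / 2 : ℝ)).isClosedEmbedding.tendsto_cocompact.comp
      Int.tendsto_coe_cofinite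
  refine Summable.of_norm_bounded_eventually (summable_exp_neg_quadratic (mul_pos pi_pos hτ)
    (π * v * (1 + 6 * a)) (π * v * (1 / 4 + 3 * a + 2 * a ^ 2))) ?_
  have hs : 0 < √(2 * v) := by positivity
  filter_upwards [hshift.eventually (eventually_abs_sign_sub_EE_le a hs)] with n hn
  rw [norm_summand]
  calc _ ≤ exp (-π * (((n : ℝ) + 1 / 2 + a) * √(2 * v)) ^ 2)
        * exp (π * v * ((n : ℝ) + 1 / 2) ^ 2 - 2 * π * ((n : ℝ) + 1 / 2) * u.im) := by gcongr
    _ = _ := by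
      rw [← exp_add, mul_pow, sq_sqrt (by positivity)]
      congr 1
      rw [hua]
      ring
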